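/- arXiv:2306.05781 — 4 statements merged into one kernel-verified Lean document; each statement's English description precedes it below -/
import Mathlib

section
/- For every real number r ≥ 2, the inequality ((r−1)/2)·(2/r)^{1/(r−1)} ≥ r/4 holds. -/
/-- For every real `r ≥ 2`, `((r-1)/2)·(2/r)^{1/(r-1)} ≥ r/4`. -/
theorem lower_bound_ineq (r : ℝ) (hr : 2 ≤ r) :
    ((r - 1) / 2) * (2 / r) ^ ((1 : ℝ) / (r - 1)) ≥ r / 4 := by
  have hr0 : (0:ℝ) < r := by linarith
  have hr1 : (0:ℝ) < r - 1 := by linarith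
  have ha : (0:ℝ) < 2 / r := by positivity
  set t : ℝ := 1 / (r - 1) with ht
  have h1 : (2 / r) ^ t ≥ 1 + Real.log (2 / r) * t := by
    rw [Real.rpow_def_of_pos ha]
    linarith [Real.add_one_le_exp (Real.log (2 / r) * t)]
  have hlog : Real.log (2 / r) = - Real.log (r / 2) := by
    rw [← Real.log_inv]; norm_num
  have h2 : Real.log (r / 2) ≤ r / 2 - 1 :=
    Real.log_le_sub_one_of_pos (by linarith)
  have hrt : (r - 1) * t = 1 := by rw [ht]; field_simp
  have hc : (r - 1) / 2 * ((1 : ℝ) + Real.log (2 / r) * t) ≥ r / 4 := by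
    rw [hlog]; nlinarith
  have hpos : (0:ℝ) ≤ (r - 1) / 2 := by linarith
  nlinarith [mul_le_mul_of_nonneg_left h1.le hpos]
end

section
/- Let r ≥ 2 be an integer, let n > 0 be a real number, and let x > 0 be a real number. Then (r−1)·x^{1/(r−1)} + n/(2^r·x) ≥ (r/4)·n^{1/r}. -/
/-!
Weighted AM–GM with weights `(r-1)/r` and `1/r` bounds `(r-1)·a + b` below by `r·a^{(r-1)/r}·b^{1/r}`.
For `a = x^{1/(r-1)}` and `b = c/x` the powers of `x` cancel, so the left-hand side is at least
`r·c^{1/r}` whatever `x` is; with `c = n/2^r` this is `(r/2)·n^{1/r}`.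
-/

namespace Real

theorem mul_rpow_mul_rpow_le_sub_one_mul_add {s a b : ℝ} (hs : 1 ≤ s) (ha : 0 ≤ a) (hb : 0 ≤ b) :
    s * (a ^ ((s - 1) / s) * b ^ (1 / s)) ≤ (s - 1) * a + b := by
  have hs₀ : 0 < s := by linarith
  have amgm := geom_mean_le_arith_mean2_weighted (div_nonneg (sub_nonneg.2 hs) hs₀.le)
    (one_div_nonneg.2 hs₀.le) ha hb (by field_simp; ring)
  calc s * (a ^ ((s - 1) / s) * b ^ (1 / s))
      ≤ s * ((s - 1) / s * a + 1 / s * b) := mul_le_mul_of_nonneg_left amgm hs₀.le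
    _ = (s - 1) * a + b := by field_simp

theorem mul_rpow_le_sub_one_mul_rpow_add_div {s x c : ℝ} (hs : 1 < s) (hx : 0 < x) (hc : 0 ≤ c) :
    s * c ^ (1 / s) ≤ (s - 1) * x ^ (1 / (s - 1)) + c / x := by
  have hs₁ : s - 1 ≠ 0 := by linarith
  have hx_pow : (x ^ (1 / (s - 1))) ^ ((s - 1) / s) = x ^ (1 / s) := by
    rw [← rpow_mul hx.le]
    congr 1
    field_simp
  have hcancel : (x ^ (1 / (s - 1))) ^ ((s - 1) / s) * (c / x) ^ (1 / s) = c ^ (1 / s) := by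
    rw [hx_pow, div_rpow hc hx.le]
    field_simp [(rpow_pos_of_pos hx (1 / s)).ne']
  rw [← hcancel]
  exact mul_rpow_mul_rpow_le_sub_one_mul_add hs.le (rpow_nonneg hx.le _) (div_nonneg hc hx.le)

theorem div_two_pow_rpow_one_div {n : ℝ} (hn : 0 ≤ n) {r : ℕ} (hr : r ≠ 0) :
    (n / 2 ^ r) ^ (1 / (r : ℝ)) = n ^ (1 / (r : ℝ)) / 2 := by
  rw [div_rpow hn (by positivity), one_div, pow_rpow_inv_natCast zero_le_two hr]

end Real

/-- For an integer `r ≥ 2` and positive reals `n`, `x`,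
`(r-1)·x^{1/(r-1)} + n/(2^r·x) ≥ (r/4)·n^{1/r}`. -/
theorem adaptive_lb_core (r : ℕ) (hr : 2 ≤ r) (n x : ℝ) (hn : 0 < n) (hx : 0 < x) :
    ((r : ℝ) - 1) * x ^ ((1 : ℝ) / ((r : ℝ) - 1)) + n / (2 ^ r * x)
      ≥ ((r : ℝ) / 4) * n ^ ((1 : ℝ) / (r : ℝ)) := by
  have hr₁ : (1 : ℝ) < r := by exact_mod_cast hr
  have tradeoff := Real.mul_rpow_le_sub_one_mul_rpow_add_div hr₁ hx (by positivity : 0 ≤ n / 2 ^ r)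
  rw [Real.div_two_pow_rpow_one_div hn.le (by omega), div_div] at tradeoff
  have hn_root : 0 ≤ n ^ ((1 : ℝ) / r) := Real.rpow_nonneg hn.le _
  calc ((r : ℝ) / 4) * n ^ ((1 : ℝ) / r) ≤ r * (n ^ ((1 : ℝ) / r) / 2) := by nlinarith
    _ ≤ _ := tradeoff
end

section
/- Let r ≥ 2 and n ≥ 1 be integers, and let k_1, …, k_r be positive integers satisfying n ≤ 2·k_r·∏_{i=1}^{r−1}(k_i + 1). Then k_1 + k_2 + ⋯ + k_r ≥ (r/4)·n^{1/r}, where n^{1/r} denotes the real r-th root of n. -/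
/-- Let `r ≥ 2` and `n ≥ 1` be integers, and let `k 1, …, k r` be positive
integers with `n ≤ 2·(k r)·∏_{i=1}^{r-1} (k i + 1)`. Then
`k 1 + ⋯ + k r ≥ (r/4)·n^{1/r}` (real `r`-th root of `n`). -/
theorem adaptive_path_lb (r n : ℕ) (hr : 2 ≤ r) (hn : 1 ≤ n) (k : ℕ → ℕ)
    (hk : ∀ i ∈ Finset.Icc 1 r, 0 < k i)
    (hcon : n ≤ 2 * k r * ∏ i ∈ Finset.Icc 1 (r - 1), (k i + 1)) :
    ((r : ℝ) / 4) * (n : ℝ) ^ ((1 : ℝ) / (r : ℝ))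
      ≤ ((∑ i ∈ Finset.Icc 1 r, k i : ℕ) : ℝ) := by
  have hr1 : 1 ≤ r := le_trans (by norm_num) hr
  have hrR : (0:ℝ) < (r:ℝ) := by positivity
  -- Step 1: n ≤ 2^r * ∏_{Icc 1 r} k i
  have hsplit : ∏ i ∈ Finset.Icc 1 r, k i = (∏ i ∈ Finset.Icc 1 (r-1), k i) * k r := by
    have : r = (r - 1) + 1 := (Nat.succ_pred_eq_of_pos hr1).symm
    rw [this, Finset.prod_Icc_succ_top (by omega)]
    rw [← this]
  have hN : n ≤ 2 ^ r * ∏ i ∈ Finset.Icc 1 r, k i := by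
    calc n ≤ 2 * k r * ∏ i ∈ Finset.Icc 1 (r - 1), (k i + 1) := hcon
    _ ≤ 2 * k r * ∏ i ∈ Finset.Icc 1 (r - 1), (2 * k i) := by
        gcongr with i hi
        obtain ⟨h1, h2⟩ := Finset.mem_Icc.mp hi
        have : 0 < k i := hk i (Finset.mem_Icc.mpr ⟨h1, by omega⟩)
        omega
    _ = 2 * k r * (2 ^ (r - 1) * ∏ i ∈ Finset.Icc 1 (r - 1), k i) := by
        rw [Finset.prod_mul_distrib, Finset.prod_const, Nat.card_Icc]; simp
    _ = 2 ^ r * ∏ i ∈ Finset.Icc 1 r, k i := by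
        rw [hsplit]
        have : 2 ^ r = 2 * 2 ^ (r - 1) := by
          rw [← pow_succ']
          congr 1; omega
        rw [this]; ring
  -- cast
  have hProdPos : ∀ i ∈ Finset.Icc 1 r, (0:ℝ) ≤ (k i : ℝ) := fun i hi => by positivity
  set P : ℝ := ∏ i ∈ Finset.Icc 1 r, (k i : ℝ) with hP
  have hPpos : 0 < P := Finset.prod_pos (fun i hi => by exact_mod_cast hk i hi)
  have hNR : (n:ℝ) ≤ 2 ^ r * P := by
    have := hN
    have : (n:ℝ) ≤ ((2 ^ r * ∏ i ∈ Finset.Icc 1 r, k i : ℕ) : ℝ) := by exact_mod_cast this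
    simpa [hP] using this
  -- rpow
  have hstep : (n:ℝ) ^ ((1:ℝ)/r) ≤ 2 * P ^ ((1:ℝ)/r) := by
    have h1 : (n:ℝ) ^ ((1:ℝ)/r) ≤ (2 ^ r * P) ^ ((1:ℝ)/r) :=
      Real.rpow_le_rpow (by positivity) hNR (by positivity)
    have h2 : ((2:ℝ) ^ r * P) ^ ((1:ℝ)/r) = 2 * P ^ ((1:ℝ)/r) := by
      rw [Real.mul_rpow (by positivity) hPpos.le]
      congr 1
      rw [← Real.rpow_natCast 2 r, ← Real.rpow_mul (by norm_num)]
      rw [mul_one_div, div_self hrR.ne', Real.rpow_one]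
    rw [h2] at h1; exact h1
  -- AM-GM
  have hamgm : P ^ ((1:ℝ)/r) ≤ (∑ i ∈ Finset.Icc 1 r, (k i : ℝ)) / r := by
    have hw : ∀ i ∈ Finset.Icc 1 r, (0:ℝ) ≤ (1:ℝ)/r := fun i _ => by positivity
    have hw' : ∑ i ∈ Finset.Icc 1 r, (1:ℝ)/r = 1 := by
      rw [Finset.sum_const, Nat.card_Icc, Nat.add_sub_cancel]
      simp only [nsmul_eq_mul, mul_one_div]
      exact div_self hrR.ne'
    have := Real.geom_mean_le_arith_mean_weighted (Finset.Icc 1 r)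
      (fun _ => (1:ℝ)/r) (fun i => (k i : ℝ)) hw hw' hProdPos
    calc P ^ ((1:ℝ)/r) = ∏ i ∈ Finset.Icc 1 r, (k i : ℝ) ^ ((1:ℝ)/r) := by
          rw [← Real.finset_prod_rpow _ _ hProdPos]
    _ ≤ ∑ i ∈ Finset.Icc 1 r, (1:ℝ)/r * (k i : ℝ) := this
    _ = (∑ i ∈ Finset.Icc 1 r, (k i : ℝ)) / r := by
          rw [← Finset.mul_sum]; ring
  have hsum : ((∑ i ∈ Finset.Icc 1 r, k i : ℕ) : ℝ) = ∑ i ∈ Finset.Icc 1 r, (k i : ℝ) := by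
    push_cast; ring
  rw [hsum]
  have : (n:ℝ) ^ ((1:ℝ)/r) ≤ 2 * ((∑ i ∈ Finset.Icc 1 r, (k i : ℝ)) / r) :=
    le_trans hstep (by linarith)
  have hsumnn : (0:ℝ) ≤ ∑ i ∈ Finset.Icc 1 r, (k i : ℝ) := Finset.sum_nonneg hProdPos
  rw [div_mul_eq_mul_div, div_le_iff₀ (by norm_num)]
  calc (r:ℝ) * ((n:ℝ) ^ ((1:ℝ)/r)) ≤ (r:ℝ) * (2 * ((∑ i ∈ Finset.Icc 1 r, (k i : ℝ)) / r)) :=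
        mul_le_mul_of_nonneg_left this hrR.le
  _ = 2 * ∑ i ∈ Finset.Icc 1 r, (k i : ℝ) := by field_simp
  _ ≤ (∑ i ∈ Finset.Icc 1 r, (k i : ℝ)) * 4 := by linarith
end

section
/- Let G = (V, E) be a finite tree (a connected acyclic simple graph) on n = |V| vertices and let L be an integer with 1 ≤ L ≤ n. Then there exists a subset A ⊆ V with |A| ≤ L such that every connected component of the induced subgraph G[V \ A] has at most ⌈n/(L+1)⌉ vertices. -/
/-!
Root the tree at `r` and pick a vertex `v` whose subtree has more than `m` vertices and is
minimal with this property. By acyclicity every component of the subtree minus `v` lies in the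
subtree of a child of `v`, so it has at most `m` vertices. Cutting at `v` therefore removes at
least `m + 1` vertices, the rest is again a tree, and induction shows that `⌊n / (m + 1)⌋` cut
vertices suffice. For `m = ⌈n / (L + 1)⌉` this is at most `L`.
-/

namespace SimpleGraph

variable {V : Type*} (G : SimpleGraph V)

def ReachableIn (W : Set V) (a b : V) : Prop :=
  ∃ p : G.Walk a b, ∀ x ∈ p.support, x ∈ W

def componentIn (W : Set V) (x : V) : Set V :=
  {w | G.ReachableIn W x w}

def PreconnectedIn (W : Set V) : Prop :=
  ∀ a ∈ W, ∀ b ∈ W, G.ReachableIn W a b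

/-- In a tree rooted at `r`, the subtree of `v`. -/
def branch (S : Set V) (r v : V) : Set V :=
  S \ G.componentIn (S \ {v}) r

variable {G} {W W₀ W' S : Set V} {a b r u v w x : V}

namespace ReachableIn

theorem left_mem (h : G.ReachableIn W a b) : a ∈ W :=
  let ⟨p, hp⟩ := h; hp a p.start_mem_support

theorem right_mem (h : G.ReachableIn W a b) : b ∈ W :=
  let ⟨p, hp⟩ := h; hp b p.end_mem_support

theorem refl (ha : a ∈ W) : G.ReachableIn W a a :=
  ⟨.nil, by simpa using ha⟩

theorem symm (h : G.ReachableIn W a b) : G.ReachableIn W b a :=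
  let ⟨p, hp⟩ := h; ⟨p.reverse, by simpa using hp⟩

theorem trans (h : G.ReachableIn W a b) (h' : G.ReachableIn W b w) : G.ReachableIn W a w := by
  obtain ⟨p, hp⟩ := h
  obtain ⟨q, hq⟩ := h'
  exact ⟨p.append q, fun x hx => (Walk.mem_support_append_iff p q).1 hx |>.elim (hp x) (hq x)⟩

theorem mono (hW : W ⊆ W') (h : G.ReachableIn W a b) : G.ReachableIn W' a b :=
  let ⟨p, hp⟩ := h; ⟨p, fun x hx => hW (hp x hx)⟩

theorem exists_isPath (h : G.ReachableIn W a b) :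
    ∃ p : G.Walk a b, p.IsPath ∧ ∀ x ∈ p.support, x ∈ W := by
  classical
  obtain ⟨p, hp⟩ := h
  exact ⟨p.bypass, p.bypass_isPath, fun x hx => hp x (p.support_bypass_subset_support hx)⟩

theorem inter_componentIn (h : G.ReachableIn W x w) (hW : W ⊆ W₀)
    (hx : G.ReachableIn W₀ r x) : G.ReachableIn (W ∩ G.componentIn W₀ r) x w := by
  classical
  obtain ⟨p, hp⟩ := h
  refine ⟨p, fun y hy => ⟨hp y hy, hx.trans ?_⟩⟩
  exact ⟨p.takeUntil y hy, fun z hz => hW (hp z (p.support_takeUntil_subset_support hy hz))⟩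

theorem suffix_of_not_reachableIn_diff (h : G.ReachableIn W a b)
    (hv : ¬ G.ReachableIn (W \ {v}) a b) : G.ReachableIn W v b := by
  classical
  obtain ⟨p, hp⟩ := h
  by_cases hvp : v ∈ p.support
  · exact ⟨p.dropUntil v hvp, fun z hz => hp z (p.support_dropUntil_subset_support hvp hz)⟩
  · exact absurd ⟨p, fun z hz => ⟨hp z hz, fun hzv => hvp (hzv ▸ hz)⟩⟩ hv

theorem prefix_of_not_reachableIn_diff (h : G.ReachableIn W a b)
    (hv : ¬ G.ReachableIn (W \ {v}) a b) (hvb : v ≠ b) : G.ReachableIn (W \ {b}) a v := by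
  classical
  obtain ⟨p, hpath, hp⟩ := h.exists_isPath
  by_cases hvp : v ∈ p.support
  · have hb := Walk.endpoint_notMem_support_takeUntil hpath hvp hvb.symm
    exact ⟨p.takeUntil v hvp, fun z hz =>
      ⟨hp z (p.support_takeUntil_subset_support hvp hz), fun hzb => hb (hzb ▸ hz)⟩⟩
  · exact absurd ⟨p, fun z hz => ⟨hp z hz, fun hzv => hvp (hzv ▸ hz)⟩⟩ hv

theorem exists_adj_reachableIn_diff (h : G.ReachableIn W a b) (hab : a ≠ b) :
    ∃ u, G.Adj a u ∧ G.ReachableIn (W \ {a}) u b := by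
  obtain ⟨p, hpath, hp⟩ := h.exists_isPath
  cases p with
  | nil => exact absurd rfl hab
  | cons hadj q =>
    obtain ⟨-, haq⟩ := (Walk.cons_isPath_iff hadj q).1 hpath
    exact ⟨_, hadj, q, fun z hz =>
      ⟨hp z (List.mem_cons_of_mem _ hz), fun hza => haq (hza ▸ hz)⟩⟩

end ReachableIn

theorem reachableIn_of_reachable_induce {a b : W} (h : (G.induce W).Reachable a b) :
    G.ReachableIn W a b := by
  obtain ⟨p⟩ := h
  refine ⟨p.map (Embedding.induce W).toHom, fun x hx => ?_⟩
  obtain ⟨y, -, rfl⟩ := List.mem_map.1 ((Walk.support_map _ p) ▸ hx)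
  exact y.2

theorem ConnectedComponent.ncard_supp_le_ncard_componentIn [Finite V]
    {C : (G.induce W).ConnectedComponent} {x : W} (hx : x ∈ C.supp) :
    C.supp.ncard ≤ (G.componentIn W x).ncard := by
  rw [← Set.ncard_image_of_injective _ Subtype.val_injective]
  refine Set.ncard_le_ncard ?_
  rintro _ ⟨y, hy, rfl⟩
  rw [ConnectedComponent.mem_supp_iff] at hx hy
  exact reachableIn_of_reachable_induce (ConnectedComponent.exact (hx.trans hy.symm))

theorem Preconnected.preconnectedIn_univ (h : G.Preconnected) : G.PreconnectedIn Set.univ :=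
  fun a _ b _ => let ⟨p⟩ := h a b; ⟨p, fun _ _ => trivial⟩

theorem componentIn_subset : G.componentIn W x ⊆ W :=
  fun _ h => h.right_mem

theorem preconnectedIn_componentIn : G.PreconnectedIn (G.componentIn W r) := by
  intro a ha b hb
  exact (ha.symm.trans hb).inter_componentIn subset_rfl ha |>.mono Set.inter_subset_right

theorem IsAcyclic.eq_of_adj_of_reachableIn (hG : G.IsAcyclic) {u' : V} (hu : G.Adj v u)
    (hu' : G.Adj v u') (h : G.ReachableIn W u u') (hv : v ∉ W) : u = u' := by
  obtain ⟨q, hq, hqW⟩ := h.exists_isPath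
  have hpath : (Walk.cons hu q).IsPath :=
    (Walk.cons_isPath_iff hu q).2 ⟨hq, fun hvq => hv (hqW v hvq)⟩
  exact ((hG.eq_snd_of_adj_start hpath hu' (Walk.end_mem_support _)).trans
    (q.snd_cons hu)).symm

theorem branch_self : G.branch S r r = S :=
  sdiff_eq_left.2 (Set.disjoint_left.2 fun _ _ hw => hw.left_mem.2 rfl)

theorem mem_branch_self (hv : v ∈ S) : v ∈ G.branch S r v :=
  ⟨hv, fun h => h.right_mem.2 rfl⟩

theorem branch_ssubset_branch (hS : G.PreconnectedIn S) (hr : r ∈ S) (hv : v ∈ S)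
    (hu : u ∈ G.branch S r v) (huv : u ≠ v) : G.branch S r u ⊂ G.branch S r v := by
  obtain ⟨huS, hur⟩ := hu
  have hcomp : G.componentIn (S \ {v}) r ⊆ G.componentIn (S \ {u}) r := fun w hw =>
    show G.ReachableIn (S \ {u}) r w from
      (hw.inter_componentIn subset_rfl (.refl hw.left_mem)).mono fun y hy =>
        ⟨hy.1.1, fun hyu => hur (hyu ▸ hy.2)⟩
  have hvu : G.ReachableIn (S \ {u}) r v :=
    (hS r hr u huS).prefix_of_not_reachableIn_diff hur huv.symm
  have hsub : G.branch S r u ⊆ G.branch S r v \ {v} := by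
    rintro w ⟨hwS, hwu⟩
    refine ⟨⟨hwS, fun h => hwu (hcomp h)⟩, ?_⟩
    rintro rfl
    exact hwu hvu
  exact hsub.trans_ssubset (Set.sdiff_singleton_ssubset.2 (mem_branch_self hv))

/-- `v` has a unique neighbour `u` in the component of `x`, so every path from `r` into that
component passes through `v` and then `u`. -/
theorem IsAcyclic.exists_subset_branch (hG : G.IsAcyclic) (hS : G.PreconnectedIn S)
    (hv : v ∈ S) (hx : x ∈ S \ {v}) (hxr : x ∉ G.componentIn (S \ {v}) r) :
    ∃ u ∈ G.branch S r v, u ≠ v ∧ G.componentIn (S \ {v}) x ⊆ G.branch S r u := by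
  have hxv : v ≠ x := fun h => hx.2 h.symm
  obtain ⟨u, hvu, hux⟩ := (hS v hv x hx.1).exists_adj_reachableIn_diff hxv
  have hfar : ∀ w ∈ G.componentIn (S \ {v}) x, w ∉ G.componentIn (S \ {v}) r :=
    fun w hw hrw => hxr (hrw.trans hw.symm)
  refine ⟨u, ⟨hux.left_mem.1, hfar u hux.symm⟩, hux.left_mem.2, ?_⟩
  intro w hw
  refine ⟨hw.right_mem.1, fun hru => ?_⟩
  have hvw : G.ReachableIn (S \ {u}) v w :=
    hru.suffix_of_not_reachableIn_diff fun h => hfar w hw (h.mono fun y hy => ⟨hy.1.1, hy.2⟩)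
  obtain ⟨u', hvu', hu'w⟩ := hvw.exists_adj_reachableIn_diff fun h => hw.right_mem.2 h.symm
  have huu' : u = u' := hG.eq_of_adj_of_reachableIn hvu hvu'
    ((hux.trans hw).trans (hu'w.symm.mono fun y hy => ⟨hy.1.1, hy.2⟩)) fun h => h.2 rfl
  exact hu'w.left_mem.1.2 huu'.symm

theorem IsAcyclic.exists_cut_vertex [Finite V] (hG : G.IsAcyclic) (hS : G.PreconnectedIn S)
    (hr : r ∈ S) {m : ℕ} (hm : m < S.ncard) :
    ∃ v ∈ S, m < (G.branch S r v).ncard ∧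
      ∀ x ∈ S \ {v}, x ∉ G.componentIn (S \ {v}) r →
        (G.componentIn (S \ {v}) x).ncard ≤ m := by
  obtain ⟨v, ⟨hv, hvm⟩, hmin⟩ :=
    Set.exists_min_image {v | v ∈ S ∧ m < (G.branch S r v).ncard}
      (fun v => (G.branch S r v).ncard) (Set.toFinite _) ⟨r, hr, by rwa [branch_self]⟩
  refine ⟨v, hv, hvm, fun x hx hxr => ?_⟩
  obtain ⟨u, hu, huv, hxu⟩ := hG.exists_subset_branch hS hv hx hxr
  have hlt := Set.ncard_lt_ncard (branch_ssubset_branch hS hr hv hu huv)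
  have hum : (G.branch S r u).ncard ≤ m :=
    not_lt.1 fun h => (hmin u ⟨hu.1, h⟩).not_gt hlt
  exact (Set.ncard_le_ncard hxu).trans hum

theorem IsAcyclic.exists_small_components [Finite V] (hG : G.IsAcyclic) (m : ℕ)
    (hS : G.PreconnectedIn S) :
    ∃ A ⊆ S, A.ncard * (m + 1) ≤ S.ncard ∧
      ∀ x ∈ S \ A, (G.componentIn (S \ A) x).ncard ≤ m := by
  induction hs : S.ncard using Nat.strong_induction_on generalizing S with
  | _ s ih =>
  rcases le_or_gt s m with hsm | hms
  · refine ⟨∅, Set.empty_subset _, by simp, fun x _ => ?_⟩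
    exact (Set.ncard_le_ncard componentIn_subset).trans (by simpa [hs] using hsm)
  obtain ⟨r, hr⟩ := Set.nonempty_of_ncard_ne_zero (s := S) (by omega)
  obtain ⟨v, hv, hvm, hsmall⟩ := hG.exists_cut_vertex hS hr (hs ▸ hms)
  set R := G.componentIn (S \ {v}) r
  have hRS : R ⊆ S := componentIn_subset.trans Set.sdiff_subset
  have hsplit : (G.branch S r v).ncard + R.ncard = s :=
    hs ▸ Set.ncard_sdiff_add_ncard_of_subset hRS
  obtain ⟨A, hAR, hAcard, hA⟩ := ih R.ncard (by omega) preconnectedIn_componentIn rfl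
  refine ⟨insert v A, Set.insert_subset hv (hAR.trans hRS), ?_, ?_⟩
  · calc (insert v A).ncard * (m + 1) ≤ (A.ncard + 1) * (m + 1) :=
          Nat.mul_le_mul_right _ (Set.ncard_insert_le v A)
      _ ≤ s := by linarith
  · rintro x ⟨hxS, hxA⟩
    have hsub : S \ insert v A ⊆ S \ {v} :=
      Set.sdiff_subset_sdiff_right (Set.singleton_subset_iff.2 (Set.mem_insert v A))
    by_cases hxR : x ∈ R
    · refine (Set.ncard_le_ncard fun w hw => ?_).trans
        (hA x ⟨hxR, fun h => hxA (Set.mem_insert_of_mem v h)⟩)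
      exact (hw.inter_componentIn hsub hxR).mono fun y hy =>
        ⟨hy.2, fun h => hy.1.2 (Set.mem_insert_of_mem v h)⟩
    · exact (Set.ncard_le_ncard fun w hw => hw.mono hsub).trans
        (hsmall x ⟨hxS, fun h => hxA (h ▸ Set.mem_insert v A)⟩ hxR)

end SimpleGraph

theorem balanced_tree_partition_general {V : Type*} [Fintype V] (G : SimpleGraph V)
    (hconn : G.Connected) (hacyc : G.IsAcyclic)
    (n : ℕ) (hn : n = Fintype.card V) (L : ℕ) :
    ∃ A : Finset V, A.card ≤ L ∧
      ∀ C : (G.induce ((↑A : Set V)ᶜ)).ConnectedComponent,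
        C.supp.ncard ≤ ⌈(n : ℚ) / ((L : ℚ) + 1)⌉₊ := by
  classical
  set m := ⌈(n : ℚ) / ((L : ℚ) + 1)⌉₊
  obtain ⟨A, -, hAcard, hA⟩ :=
    hacyc.exists_small_components m hconn.preconnected.preconnectedIn_univ
  rw [Set.ncard_univ, Nat.card_eq_fintype_card, ← hn] at hAcard
  have hnm : n ≤ m * (L + 1) := by
    have h : (n : ℚ) / ((L : ℚ) + 1) ≤ m := Nat.le_ceil _
    rw [div_le_iff₀ (by positivity)] at h
    exact_mod_cast h
  refine ⟨A.toFinset, ?_, fun C => ?_⟩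
  · rw [← Set.ncard_eq_toFinset_card']
    nlinarith
  · obtain ⟨x, rfl⟩ := C.exists_rep
    refine (SimpleGraph.ConnectedComponent.ncard_supp_le_ncard_componentIn rfl).trans ?_
    have hxA : (x : V) ∉ A := by simpa using x.2
    simpa [Set.compl_eq_univ_sdiff] using hA x ⟨Set.mem_univ _, hxA⟩

/-- Let `G` be a finite tree (connected acyclic simple graph) on `n`
vertices and let `1 ≤ L ≤ n`. Then there is a set `A` of at most `L`
vertices such that every connected component of the subgraph induced
on the complement of `A` has at most `⌈n/(L+1)⌉` vertices. -/
theorem balanced_tree_partition {V : Type*} [Fintype V] (G : SimpleGraph V)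
    (hconn : G.Connected) (hacyc : G.IsAcyclic)
    (n : ℕ) (hn : n = Fintype.card V) (L : ℕ) (hL1 : 1 ≤ L) (hLn : L ≤ n) :
    ∃ A : Finset V, A.card ≤ L ∧
      ∀ C : (G.induce ((↑A : Set V)ᶜ)).ConnectedComponent,
        C.supp.ncard ≤ ⌈(n : ℚ) / ((L : ℚ) + 1)⌉₊ :=
  balanced_tree_partition_general G hconn hacyc n hn L
end
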